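/- arXiv:1102.4226 — 3 statements merged into one kernel-verified Lean document; each statement's English description precedes it below -/
import Mathlib

section
/- The number of descents of any permutation τ equals ∑_{π : π(1) > π(|π|)} (-1)^{|π|} · occ(π, τ), where the sum is over all nonempty permutations π whose first entry exceeds their last entry and occ(π, τ) is the number of occurrences of π as a classical pattern in τ. -/
open Finset

/-- Number of occurrences of the classical pattern `σ` in `τ`. -/
def occ {k n : ℕ} (σ : Equiv.Perm (Fin k)) (τ : Equiv.Perm (Fin n)) : ℕ :=
  (univ.filter fun f : Fin k → Fin n =>
    (∀ i j : Fin k, i < j → f i < f j) ∧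
    (∀ i j : Fin k, σ i < σ j ↔ τ (f i) < τ (f j))).card

/-- The number of descents of `τ`: indices `i` with `τ(i) > τ(i+1)`. -/
def des {n : ℕ} (τ : Equiv.Perm (Fin n)) : ℕ :=
  ((range n).filter fun i =>
    if h : i + 1 < n then τ ⟨i + 1, h⟩ < τ ⟨i, by omega⟩ else False).card

/-!
An increasing map `f : Fin (m + 1) → Fin n` is an occurrence of exactly one pattern, the
standardisation of `τ ∘ f`, so the right-hand side counts, with sign `(-1) ^ (m + 1)`, the
increasing maps `f` with `τ (f last) < τ (f 0)`. Such a map is the same as its image `S`; sorting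
these sets by their minimum `a` and maximum `b`, the sets `{a, b} ⊆ S ⊆ [a, b]` have alternating
sum `0` unless `[a, b] = {a, b}`. What survives are the pairs `(a, a + 1)` with
`τ (a + 1) < τ a`, that is, the descents of `τ`.
-/

open Equiv

theorem Tuple.eq_sort_symm_iff {α : Type*} [LinearOrder α] {k : ℕ} {g : Fin k → α}
    (hg : Function.Injective g) {σ : Perm (Fin k)} :
    σ = (sort g).symm ↔ ∀ i j, σ i < σ j ↔ g i < g j := by
  have hsorted : StrictMono (g ∘ sort g) :=
    (monotone_sort g).strictMono_of_injective (hg.comp (sort g).injective)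
  constructor
  · rintro rfl i j
    simpa using (hsorted.lt_iff_lt (a := (sort g).symm i) (b := (sort g).symm j)).symm
  · intro hσ
    have : StrictMono (σ ∘ sort g) := fun x y hxy => (hσ _ _).2 (hsorted hxy)
    ext1 i
    simpa using congrFun this.eq_id ((sort g).symm i)

lemma occ_eq_card_sort_symm {k n : ℕ} (π : Perm (Fin k)) (τ : Perm (Fin n)) :
    occ π τ = #{f : Fin k → Fin n | StrictMono f ∧ (Tuple.sort (τ ∘ f)).symm = π} := by
  refine congrArg card (filter_congr fun f _ => and_congr_right fun (hf : StrictMono f) => ?_)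
  rw [eq_comm, Tuple.eq_sort_symm_iff (τ.injective.comp hf.injective)]
  rfl

lemma sum_occ_filter_lt {k n : ℕ} (τ : Perm (Fin n)) (i j : Fin k) :
    ∑ π : Perm (Fin k) with π i < π j, occ π τ =
      #{f : Fin k → Fin n | StrictMono f ∧ τ (f i) < τ (f j)} := by
  have hpattern {f : Fin k → Fin n} (hf : StrictMono f) :
      ∀ a b, (Tuple.sort (τ ∘ f)).symm a < (Tuple.sort (τ ∘ f)).symm b ↔ τ (f a) < τ (f b) :=
    (Tuple.eq_sort_symm_iff (τ.injective.comp hf.injective)).1 rfl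
  rw [card_eq_sum_card_fiberwise (f := fun f => (Tuple.sort (τ ∘ f)).symm)]
  · refine sum_congr rfl fun π hπ => ?_
    rw [occ_eq_card_sort_symm, filter_filter]
    refine congrArg card (filter_congr fun f _ => ?_)
    constructor
    · rintro ⟨hf, rfl⟩
      exact ⟨⟨hf, (hpattern hf i j).1 (mem_filter.1 hπ).2⟩, rfl⟩
    · rintro ⟨⟨hf, -⟩, rfl⟩
      exact ⟨hf, rfl⟩
  · intro f hf
    simp only [coe_filter, mem_univ, true_and, Set.mem_ofPred_eq] at hf ⊢
    exact (hpattern hf.1 i j).2 hf.2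

section StrictMono

variable {α : Type*} [Fintype α] [LinearOrder α] [LocallyFiniteOrder α]

/-- `Icc {a, b} (Icc a b)` is the family of finsets with minimum `a` and maximum `b`. -/
lemma card_strictMono_eq_card_Icc (m : ℕ) (a b : α) :
    #{f : Fin (m + 1) → α | StrictMono f ∧ f 0 = a ∧ f (Fin.last m) = b} =
      #{S ∈ Icc {a, b} (Icc a b) | #S = m + 1} := by
  refine card_bij (fun f _ => image f univ) ?_ ?_ ?_
  · simp only [mem_filter, mem_univ, true_and, Finset.mem_Icc]
    rintro f ⟨hf, rfl, rfl⟩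
    refine ⟨⟨?_, fun x hx => ?_⟩, ?_⟩
    · simp [insert_subset_iff]
    · obtain ⟨i, -, rfl⟩ := mem_image.1 hx
      exact Finset.mem_Icc.2 ⟨hf.monotone (Fin.zero_le i), hf.monotone (Fin.le_last i)⟩
    · rw [card_image_of_injective _ hf.injective, card_univ, Fintype.card_fin]
  · intro f hf g hg hfg
    simp only [mem_filter, mem_univ, true_and] at hf hg
    refine (hf.1.range_inj hg.1).1 ?_
    simpa using congrArg ((↑) : Finset α → Set α) hfg
  · intro S hS
    simp only [mem_filter, Finset.mem_Icc, insert_subset_iff, singleton_subset_iff] at hS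
    obtain ⟨⟨⟨ha, hb⟩, hsub⟩, hcard⟩ := hS
    refine ⟨S.orderEmbOfFin hcard, ?_, image_orderEmbOfFin_univ S hcard⟩
    simp only [mem_filter, mem_univ, true_and]
    refine ⟨(S.orderEmbOfFin hcard).strictMono, ?_, ?_⟩
    · rw [show (0 : Fin (m + 1)) = ⟨0, m.succ_pos⟩ from rfl, orderEmbOfFin_zero hcard m.succ_pos]
      exact le_antisymm (min'_le S a ha)
        (le_min' _ _ _ fun x hx => (Finset.mem_Icc.1 (hsub hx)).1)
    · rw [show Fin.last m = ⟨m + 1 - 1, by omega⟩ from rfl,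
        orderEmbOfFin_last hcard m.succ_pos]
      exact le_antisymm (max'_le _ _ _ fun x hx => (Finset.mem_Icc.1 (hsub hx)).2)
        (le_max' S b hb)

lemma card_strictMono_filter_eq_sum (m : ℕ) (P : α → α → Prop) [DecidableRel P] :
    #{f : Fin (m + 1) → α | StrictMono f ∧ P (f 0) (f (Fin.last m))} =
      ∑ p : α × α with P p.1 p.2, #{S ∈ Icc {p.1, p.2} (Icc p.1 p.2) | #S = m + 1} := by
  rw [card_eq_sum_card_fiberwise (f := fun f => (f 0, f (Fin.last m)))]
  · refine sum_congr rfl fun p hp => ?_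
    rw [← card_strictMono_eq_card_Icc, filter_filter]
    refine congrArg card (filter_congr fun f _ => ?_)
    rw [Prod.ext_iff]
    constructor
    · rintro ⟨⟨hf, -⟩, h0, hlast⟩
      exact ⟨hf, h0, hlast⟩
    · rintro ⟨hf, h0, hlast⟩
      exact ⟨⟨hf, h0 ▸ hlast ▸ (mem_filter.1 hp).2⟩, h0, hlast⟩
  · intro f hf
    simp only [coe_filter, mem_univ, true_and, Set.mem_ofPred_eq] at hf ⊢
    exact hf.2

end StrictMono

lemma sum_signed_occ_eq_sum_card_Icc {n : ℕ} (τ : Perm (Fin n)) (m : ℕ) :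
    (∑ π : Perm (Fin (m + 1)),
        if π (Fin.last m) < π 0 then (-1 : ℤ) ^ (m + 1) * (occ π τ : ℤ) else 0) =
      ∑ p : Fin n × Fin n with τ p.2 < τ p.1,
        (-1) ^ (m + 1) * (#{S ∈ Icc {p.1, p.2} (Icc p.1 p.2) | #S = m + 1} : ℤ) := by
  rw [← sum_filter, ← mul_sum, ← mul_sum, ← Nat.cast_sum, ← Nat.cast_sum, sum_occ_filter_lt,
    card_strictMono_filter_eq_sum m (fun a b => τ b < τ a)]

lemma sum_range_mul_card_filter_card_eq {β R : Type*} [Fintype β] [Semiring R] (g : ℕ → R)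
    {X : Finset (Finset β)} (hX : ∅ ∉ X) :
    ∑ m ∈ range (Fintype.card β), g (m + 1) * #{S ∈ X | #S = m + 1} = ∑ S ∈ X, g #S := by
  rw [← sum_fiberwise_of_maps_to (g := card) (t := range (Fintype.card β + 1))
    fun S _ => mem_range.2 (Nat.lt_succ_of_le (card_le_univ S)), sum_range_succ']
  have hempty : {S ∈ X | #S = 0} = ∅ :=
    filter_false_of_mem fun S hS h => hX (card_eq_zero.1 h ▸ hS)
  rw [hempty, sum_empty, add_zero]
  refine sum_congr rfl fun m _ => ?_
  rw [sum_congr rfl fun S hS => by rw [(mem_filter.1 hS).2], sum_const, nsmul_eq_mul,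
    Nat.cast_comm]

theorem Finset.sum_Icc_neg_one_pow_card {α : Type*} [DecidableEq α] (s t : Finset α) :
    ∑ u ∈ Icc s t, (-1 : ℤ) ^ #u = if s = t then (-1) ^ #s else 0 := by
  by_cases hst : s ⊆ t
  · have hdisj : ∀ u ∈ (t \ s).powerset, Disjoint s u := fun u hu =>
      disjoint_of_subset_right (mem_powerset.1 hu) disjoint_sdiff
    rw [Icc_eq_image_powerset hst, sum_image, sum_congr rfl fun u hu => by
        rw [card_union_of_disjoint (hdisj u hu), pow_add],
      ← mul_sum, sum_powerset_neg_one_pow_card]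
    · have : t \ s = ∅ ↔ s = t := by
        rw [sdiff_eq_empty_iff_subset]
        exact ⟨hst.antisymm, (·.ge)⟩
      simp [this]
    · intro u hu v hv huv
      rw [← union_sdiff_cancel_left (hdisj u hu), show s ∪ u = s ∪ v from huv,
        union_sdiff_cancel_left (hdisj v hv)]
  · rw [Icc_eq_empty (by exact hst), sum_empty, if_neg (by rintro rfl; exact hst subset_rfl)]

theorem Finset.pair_eq_Icc_iff_wcovBy {α : Type*} [LinearOrder α] [LocallyFiniteOrder α]
    {a b : α} : ({a, b} : Finset α) = Icc a b ↔ a ⩿ b := by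
  constructor
  · intro h
    have hb : b ∈ Icc a b := h ▸ mem_insert_of_mem (mem_singleton_self b)
    refine ⟨(Finset.mem_Icc.1 hb).1, fun c hac hcb => ?_⟩
    have hc : c ∈ ({a, b} : Finset α) := h ▸ Finset.mem_Icc.2 ⟨hac.le, hcb.le⟩
    rcases mem_insert.1 hc with rfl | hc
    · exact hac.false
    · exact hcb.ne (mem_singleton.1 hc)
  · intro h
    exact coe_injective (by simpa using h.Icc_eq.symm)

theorem Fin.covBy_iff_val_add_one_eq {n : ℕ} {a b : Fin n} : a ⋖ b ↔ (a : ℕ) + 1 = b := by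
  rw [Fin.covBy_iff, Order.covBy_iff_add_one_eq]

lemma Fin.sum_Icc_pair_neg_one_pow_card {n : ℕ} {a b : Fin n} (hab : a ≠ b) :
    ∑ S ∈ Icc {a, b} (Icc a b), (-1 : ℤ) ^ #S = if (a : ℕ) + 1 = b then 1 else 0 := by
  have hcovBy : ({a, b} : Finset (Fin n)) = Icc a b ↔ (a : ℕ) + 1 = b := by
    rw [pair_eq_Icc_iff_wcovBy, wcovBy_iff_covBy_or_eq, or_iff_left hab,
      Fin.covBy_iff_val_add_one_eq]
  rw [sum_Icc_neg_one_pow_card, card_pair hab]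
  exact if_congr hcovBy (by norm_num) rfl

lemma des_eq_card_filter_succ {n : ℕ} (τ : Perm (Fin n)) :
    des τ = #{p : Fin n × Fin n | τ p.2 < τ p.1 ∧ (p.1 : ℕ) + 1 = p.2} := by
  symm
  refine card_bij (fun p _ => (p.1 : ℕ)) ?_ ?_ ?_
  · rintro ⟨a, b⟩ hp
    simp only [mem_filter, mem_univ, true_and] at hp
    obtain ⟨hτ, hab⟩ := hp
    have hb : (a : ℕ) + 1 < n := hab ▸ b.isLt
    obtain rfl : (⟨a + 1, hb⟩ : Fin n) = b := Fin.ext hab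
    simpa [hb] using hτ
  · rintro ⟨a, b⟩ hp ⟨a', b'⟩ hp' (h : (a : ℕ) = a')
    simp only [mem_filter, mem_univ, true_and] at hp hp'
    exact Prod.ext (Fin.ext h) (Fin.ext (show (b : ℕ) = b' by omega))
  · intro i hi
    simp only [mem_filter, mem_range] at hi
    obtain ⟨hi, hdes⟩ := hi
    by_cases hsucc : i + 1 < n
    · rw [dif_pos hsucc] at hdes
      exact ⟨(⟨i, hi⟩, ⟨i + 1, hsucc⟩), by simpa using hdes, rfl⟩
    · rw [dif_neg hsucc] at hdes
      exact hdes.elim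

/-- Patterns longer than `τ` have no occurrences, so only the sizes `m + 1 ≤ n` appear. -/

theorem des_expansion (n : ℕ) (τ : Equiv.Perm (Fin n)) :
    (des τ : ℤ) =
      ∑ m ∈ range n, ∑ π : Equiv.Perm (Fin (m + 1)),
        if π (Fin.last m) < π 0 then (-1 : ℤ) ^ (m + 1) * (occ π τ : ℤ) else 0 := by
  calc (des τ : ℤ)
      = ∑ p : Fin n × Fin n with τ p.2 < τ p.1, if (p.1 : ℕ) + 1 = p.2 then 1 else 0 := by
        rw [des_eq_card_filter_succ, sum_boole, filter_filter]
    _ = ∑ p : Fin n × Fin n with τ p.2 < τ p.1,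
          ∑ S ∈ Icc {p.1, p.2} (Icc p.1 p.2), (-1 : ℤ) ^ #S :=
        sum_congr rfl fun p hp =>
          (Fin.sum_Icc_pair_neg_one_pow_card fun h => (mem_filter.1 hp).2.ne' (congrArg τ h)).symm
    _ = ∑ p : Fin n × Fin n with τ p.2 < τ p.1, ∑ m ∈ range n,
          (-1) ^ (m + 1) * (#{S ∈ Icc {p.1, p.2} (Icc p.1 p.2) | #S = m + 1} : ℤ) := by
        refine sum_congr rfl fun p _ => ?_
        have := sum_range_mul_card_filter_card_eq (fun k => (-1 : ℤ) ^ k)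
          (X := Icc {p.1, p.2} (Icc p.1 p.2)) (by simp)
        rwa [Fintype.card_fin, eq_comm] at this
    _ = _ := by
        rw [sum_comm]
        exact sum_congr rfl fun m _ => (sum_signed_occ_eq_sum_card_Icc τ m).symm
end

section
/- The number of strong fixed points of any permutation τ equals ∑_π (-1)^{|π|-1} · ssfix(π) · occ(π, τ), summed over all nonempty permutations π, where ssfix(π) is the number of skew strong fixed points of π and occ(π, τ) counts classical occurrences of π in τ. -/
open Finset

/-- The number of strong fixed points of `τ`: positions `j` with `τ(i) < τ(j)` for
all `i < j` and `τ(j) < τ(i)` for all `i > j`. -/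
def sfix {n : ℕ} (τ : Equiv.Perm (Fin n)) : ℕ :=
  (univ.filter fun j : Fin n =>
    (∀ i : Fin n, i < j → τ i < τ j) ∧ (∀ i : Fin n, j < i → τ j < τ i)).card

/-- The number of skew strong fixed points of `τ`: positions `j` with `τ(j) < τ(i)`
for all `i < j` and `τ(i) < τ(j)` for all `i > j`. -/
def ssfix {n : ℕ} (τ : Equiv.Perm (Fin n)) : ℕ :=
  (univ.filter fun j : Fin n =>
    (∀ i : Fin n, i < j → τ j < τ i) ∧ (∀ i : Fin n, j < i → τ i < τ j)).card

/-!
A position `x` of `τ` is a strong fixed point iff no position forms an inversion with it, i.e. iff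
its set `B(x)` of inversion partners is empty; as `|B(x)| < n`, the alternating binomial sum
`∑_{m < n} (-1)^m C(|B(x)|, m)` is the indicator of this. On the other side, an occurrence `f` of a
pattern `π` of length `m + 1` together with a skew strong fixed point `j` of `π` is the same thing
as a position `x = f j` of `τ` together with an `m`-subset of `B(x)`, namely the other positions
of the occurrence. Hence `∑_π ssfix(π) occ(π, τ) = ∑_x C(|B(x)|, m)`, and summing over `m` with
signs gives `sfix τ`.
-/

open Equiv Function

theorem Equiv.Perm.eq_of_lt_iff_lt {k : ℕ} {π π' : Perm (Fin k)}
    (h : ∀ i j, π i < π j ↔ π' i < π' j) : π = π' := by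
  have hmono : StrictMono (π' * π⁻¹) := fun a b hab => by simpa [← h] using hab
  have hid : π' * π⁻¹ = 1 := by
    ext1 a
    exact DFunLike.congr_fun
      (Subsingleton.elim (hmono.orderIsoOfSurjective _ (Equiv.surjective _)) (OrderIso.refl _)) a
  exact (mul_inv_eq_one.1 hid).symm

theorem exists_perm_lt_iff_lt {k : ℕ} {α : Type*} [LinearOrder α] {g : Fin k → α}
    (hg : Injective g) : ∃ π : Perm (Fin k), ∀ i j, π i < π j ↔ g i < g j := by
  have hmono : StrictMono (g ∘ Tuple.sort g) :=
    (Tuple.monotone_sort g).strictMono_of_injective (hg.comp (Tuple.sort g).injective)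
  refine ⟨(Tuple.sort g)⁻¹, fun i j => ?_⟩
  simpa using (hmono.lt_iff_lt (a := (Tuple.sort g)⁻¹ i) (b := (Tuple.sort g)⁻¹ j)).symm

theorem StrictMono.eq_of_image_univ_eq {k : ℕ} {α : Type*} [LinearOrder α] [DecidableEq α]
    {f g : Fin k → α} (hf : StrictMono f) (hg : StrictMono g)
    (h : univ.image f = univ.image g) : f = g := by
  rw [← hf.range_inj hg, ← Set.image_univ, ← Set.image_univ, ← coe_univ, ← coe_image,
    ← coe_image, h]

section InversionPartners

variable {n : ℕ} (τ : Perm (Fin n))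

def inversionPartners (x : Fin n) : Finset (Fin n) :=
  {i | (i < x ∧ τ x < τ i) ∨ (x < i ∧ τ i < τ x)}

variable {τ}

@[simp]
theorem mem_inversionPartners {x i : Fin n} :
    i ∈ inversionPartners τ x ↔ (i < x ∧ τ x < τ i) ∨ (x < i ∧ τ i < τ x) := by
  simp [inversionPartners]

theorem self_notMem_inversionPartners (x : Fin n) : x ∉ inversionPartners τ x := by
  simp

theorem card_inversionPartners_lt (x : Fin n) : #(inversionPartners τ x) < n := by
  have hx : inversionPartners τ x ⊂ univ :=
    ssubset_univ_iff.2 fun h => self_notMem_inversionPartners x (h ▸ mem_univ x)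
  simpa using card_lt_card hx

theorem inversionPartners_eq_empty_iff {x : Fin n} :
    inversionPartners τ x = ∅ ↔
      (∀ i, i < x → τ i < τ x) ∧ (∀ i, x < i → τ x < τ i) := by
  simp only [eq_empty_iff_forall_notMem, mem_inversionPartners, not_or, not_and, not_lt]
  refine ⟨fun h => ⟨fun i hi => ?_, fun i hi => ?_⟩, fun h i => ⟨fun hi => ?_, fun hi => ?_⟩⟩
  · exact ((h i).1 hi).lt_of_ne (τ.injective.ne hi.ne)
  · exact ((h i).2 hi).lt_of_ne (τ.injective.ne hi.ne)
  · exact (h.1 i hi).le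
  · exact (h.2 i hi).le

theorem sfix_eq_card_filter_inversionPartners_eq_empty (τ : Perm (Fin n)) :
    sfix τ = #{x | inversionPartners τ x = ∅} := by
  simp only [sfix, inversionPartners_eq_empty_iff]

end InversionPartners

theorem skewStrongFixed_iff_image_erase_subset {k n : ℕ} {τ : Perm (Fin n)} {π : Perm (Fin k)}
    {f : Fin k → Fin n} (hf : StrictMono f)
    (hπ : ∀ i j, π i < π j ↔ τ (f i) < τ (f j)) (j : Fin k) :
    ((∀ i, i < j → π j < π i) ∧ (∀ i, j < i → π i < π j)) ↔
      (univ.image f).erase (f j) ⊆ inversionPartners τ (f j) := by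
  simp only [← image_erase hf.injective, image_subset_iff, mem_erase, mem_univ, and_true,
    mem_inversionPartners, hπ, hf.lt_iff_lt]
  refine ⟨fun h i hij => ?_, fun h => ⟨fun i hij => ?_, fun i hij => ?_⟩⟩
  · rcases hij.lt_or_gt with hlt | hgt
    · exact Or.inl ⟨hlt, h.1 i hlt⟩
    · exact Or.inr ⟨hgt, h.2 i hgt⟩
  · exact ((h i hij.ne).resolve_right fun h' => hij.not_gt h'.1).2
  · exact ((h i hij.ne').resolve_left fun h' => hij.not_gt h'.1).2

theorem sum_ssfix_mul_occ {n : ℕ} (τ : Perm (Fin n)) (m : ℕ) :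
    ∑ π : Perm (Fin (m + 1)), ssfix π * occ π τ = ∑ x, (#(inversionPartners τ x)).choose m := by
  simp only [ssfix, occ, ← card_product, ← card_powersetCard, ← card_sigma]
  refine card_bij (fun p _ => ⟨p.2.2 p.2.1, (univ.image p.2.2).erase (p.2.2 p.2.1)⟩) ?_ ?_ ?_
  · rintro ⟨π, j, f⟩ hp
    simp only [mem_sigma, mem_product, mem_filter, mem_univ, true_and] at hp
    obtain ⟨hj, hf, hπ⟩ := hp
    simp only [mem_sigma, mem_univ, true_and, mem_powersetCard]
    refine ⟨(skewStrongFixed_iff_image_erase_subset hf hπ j).1 hj, ?_⟩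
    rw [card_erase_of_mem (mem_image_of_mem f (mem_univ j)),
      card_image_of_injective _ (StrictMono.injective hf), card_univ, Fintype.card_fin,
      Nat.add_sub_cancel]
  · rintro ⟨π₁, j₁, f₁⟩ hp₁ ⟨π₂, j₂, f₂⟩ hp₂ heq
    simp only [mem_sigma, mem_product, mem_filter, mem_univ, true_and] at hp₁ hp₂
    obtain ⟨-, hf₁, hπ₁⟩ := hp₁
    obtain ⟨-, hf₂, hπ₂⟩ := hp₂
    obtain ⟨hx, hS⟩ : f₁ j₁ = f₂ j₂ ∧
        (univ.image f₁).erase (f₁ j₁) = (univ.image f₂).erase (f₂ j₂) := by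
      simpa using heq
    obtain rfl : f₁ = f₂ := StrictMono.eq_of_image_univ_eq hf₁ hf₂ <| by
      rw [← insert_erase (mem_image_of_mem f₁ (mem_univ j₁)),
        ← insert_erase (mem_image_of_mem f₂ (mem_univ j₂)), hS, hx]
    obtain rfl : j₁ = j₂ := StrictMono.injective hf₁ hx
    obtain rfl : π₁ = π₂ := Perm.eq_of_lt_iff_lt fun i j => (hπ₁ i j).trans (hπ₂ i j).symm
    rfl
  · rintro ⟨x, S⟩ hxS
    simp only [mem_sigma, mem_univ, true_and, mem_powersetCard] at hxS
    obtain ⟨hS, hcard⟩ := hxS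
    have hx : x ∉ S := fun h => self_notMem_inversionPartners x (hS h)
    have hcard' : #(insert x S) = m + 1 := by rw [card_insert_of_notMem hx, hcard]
    set f := (insert x S).orderEmbOfFin hcard'
    have himage : univ.image f = insert x S := image_orderEmbOfFin_univ _ hcard'
    obtain ⟨j, -, hj⟩ := mem_image.1 (himage ▸ mem_insert_self x S : x ∈ univ.image f)
    obtain ⟨π, hπ⟩ := exists_perm_lt_iff_lt (τ.injective.comp f.injective)
    have hj' : (univ.image f).erase (f j) = S := by rw [himage, hj, erase_insert hx]
    refine ⟨⟨π, j, f⟩, ?_, ?_⟩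
    · simp only [mem_sigma, mem_product, mem_filter, mem_univ, true_and]
      refine ⟨(skewStrongFixed_iff_image_erase_subset f.strictMono hπ j).2 ?_, f.strictMono, hπ⟩
      rwa [hj', hj]
    · dsimp only; rw [hj', hj]

theorem Int.alternating_sum_range_choose_of_lt {d n : ℕ} (h : d < n) :
    ∑ m ∈ Finset.range n, (-1 : ℤ) ^ m * d.choose m = if d = 0 then 1 else 0 := by
  rw [← sum_subset (range_subset_range.2 h) fun m _ hm => ?_, Int.alternating_sum_range_choose]
  rw [Nat.choose_eq_zero_of_lt (by simpa using hm), Nat.cast_zero, mul_zero]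

/-- `sfix τ = ∑_π (-1)^{|π|-1} ssfix(π) occ(π, τ)`, summed over all nonempty
permutations `π`; patterns longer than `τ` contribute `0`, so the sum ranges over
sizes `m + 1 ∈ [1, n]`. -/
theorem sfix_expansion (n : ℕ) (τ : Equiv.Perm (Fin n)) :
    (sfix τ : ℤ) =
      ∑ m ∈ range n, ∑ π : Equiv.Perm (Fin (m + 1)),
        (-1 : ℤ) ^ m * (ssfix π : ℤ) * (occ π τ : ℤ) := by
  calc (sfix τ : ℤ) = ∑ x, if inversionPartners τ x = ∅ then 1 else 0 := by
        rw [sfix_eq_card_filter_inversionPartners_eq_empty, natCast_card_filter]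
    _ = ∑ x, ∑ m ∈ range n, (-1) ^ m * ((#(inversionPartners τ x)).choose m : ℤ) := by
        refine sum_congr rfl fun x _ => ?_
        simp only [Int.alternating_sum_range_choose_of_lt (card_inversionPartners_lt x),
          card_eq_zero]
    _ = ∑ m ∈ range n, (-1) ^ m * ((∑ π : Perm (Fin (m + 1)), ssfix π * occ π τ : ℕ) : ℤ) := by
        simp only [sum_comm (s := univ), sum_ssfix_mul_occ, Nat.cast_sum, mul_sum]
    _ = _ := by
        simp only [Nat.cast_sum, Nat.cast_mul, mul_sum, mul_assoc]
end

section
/- The number of fixed points of any permutation τ equals ∑_π (-1)^{|π|-1} (∑_{x ∈ SSF(π)} C(|π|-1, x-1)) · occ(π, τ), summed over all nonempty permutations π. -/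
/-!
Writing `occ π τ` as a sum over increasing maps `f` and trading `f` for its image `S`, a skew
strong fixed point `j` of the pattern `π` of `τ ∘ f` becomes a point `s ∈ S` that is skew-fixed
for `τ` restricted to `S`, with `π j = |S| - 1 - #{t ∈ S | t < s}`. Grouping by `s`, these `S` are
exactly `{s} ∪ A ∪ B` with `A ⊆ invBefore τ s`, `B ⊆ invAfter τ s` (the inversions of `τ` that
involve `s`), and the alternating sum of `C(|A| + |B|, |A|)` over such `A, B` is `1` or `0`
according as the two inversion sets have equal size, i.e. (comparing both with `s` and `τ s`)
according as `τ s = s`.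
-/

open Finset

/-- The set of positions of skew strong fixed points of `π`: positions `j` such that
no `i < j` has `π(i) < π(j)` and no `i > j` has `π(i) > π(j)`. -/
def ssfPos {n : ℕ} (π : Equiv.Perm (Fin n)) : Finset (Fin n) :=
  univ.filter fun j : Fin n =>
    (∀ i : Fin n, i < j → π j < π i) ∧ (∀ i : Fin n, j < i → π i < π j)

-- Read off the coefficient of `X ^ k` in `(1 - (X + 1)) ^ p = (-X) ^ p`.
theorem sum_neg_one_pow_mul_choose_mul_choose (p k : ℕ) :
    ∑ a ∈ range (p + 1), (-1 : ℤ) ^ a * p.choose a * a.choose k =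
      if p = k then (-1) ^ p else 0 := by
  have h := congrArg (Polynomial.coeff · k) (add_pow (.C (-1) * (.X + 1) : Polynomial ℤ) 1 p)
  have hX : (.C (-1) * (.X + 1) + 1 : Polynomial ℤ) = .C (-1) * .X := by simp
  simp only [hX, one_pow, mul_one, Polynomial.finsetSum_coeff, mul_pow, ← Polynomial.C_pow,
    Polynomial.coeff_C_mul, Polynomial.coeff_X_pow, ← Nat.cast_comm,
    Polynomial.coeff_natCast_mul, Polynomial.coeff_X_add_one_pow] at h
  calc _ = ∑ a ∈ range (p + 1), (p.choose a : ℤ) * (a.choose k * (-1) ^ a) :=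
        sum_congr rfl fun _ _ => by ring
    _ = _ := by rw [← h]; rcases eq_or_ne p k with rfl | hpk <;> simp [*, Ne.symm]

theorem Nat.add_choose_left_eq_sum_choose_mul_choose (a b N : ℕ) (ha : a < N) :
    (a + b).choose a = ∑ k ∈ range N, a.choose k * b.choose k := by
  rw [Nat.add_choose_eq, Nat.sum_antidiagonal_eq_sum_range_succ_mk, ← sum_range_reflect,
    ← sum_subset (range_subset_range.2 ha) fun k _ hk => by
      rw [Nat.choose_eq_zero_of_lt (by simpa using hk), zero_mul]]
  refine sum_congr rfl fun k hk => ?_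
  have hk : k ≤ a := Nat.lt_succ_iff.1 (mem_range.1 hk)
  rw [Nat.succ_sub_one, Nat.sub_sub_self hk, Nat.choose_symm hk]

theorem sum_sum_neg_one_pow_mul_choose_mul_choose_mul_add_choose (p q : ℕ) :
    ∑ a ∈ range (p + 1), ∑ b ∈ range (q + 1),
        (-1 : ℤ) ^ (a + b) * p.choose a * q.choose b * (a + b).choose a =
      if p = q then 1 else 0 := by
  calc _ = ∑ a ∈ range (p + 1), ∑ b ∈ range (q + 1), ∑ k ∈ range (p + 1),
        ((-1 : ℤ) ^ a * p.choose a * a.choose k) * ((-1) ^ b * q.choose b * b.choose k) := by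
        refine sum_congr rfl fun a ha => sum_congr rfl fun b _ => ?_
        rw [Nat.add_choose_left_eq_sum_choose_mul_choose a b (p + 1) (mem_range.1 ha)]
        push_cast
        rw [mul_sum]
        exact sum_congr rfl fun _ _ => by ring
    _ = ∑ k ∈ range (p + 1), (∑ a ∈ range (p + 1), (-1 : ℤ) ^ a * p.choose a * a.choose k) *
          ∑ b ∈ range (q + 1), (-1 : ℤ) ^ b * q.choose b * b.choose k := by
        simp_rw [sum_mul_sum]
        rw [sum_congr rfl fun a _ => sum_comm, sum_comm]
    _ = _ := by
        simp_rw [sum_neg_one_pow_mul_choose_mul_choose]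
        split_ifs with h
        · subst h; simp [← pow_add, ← two_mul, pow_mul]
        · simp [h]

theorem sum_powerset_sum_powerset_neg_one_pow_mul_add_choose {β : Type*} (P Q : Finset β) :
    ∑ A ∈ P.powerset, ∑ B ∈ Q.powerset, (-1 : ℤ) ^ (#A + #B) * (#A + #B).choose #A =
      if #P = #Q then 1 else 0 := by
  let f : ℕ → ℕ → ℤ := fun a b => (-1) ^ (a + b) * (a + b).choose a
  rw [sum_congr rfl fun A _ => sum_powerset_apply_card (f #A),
    sum_powerset_apply_card fun a => ∑ b ∈ range (#Q + 1), (#Q).choose b • f a b,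
    ← sum_sum_neg_one_pow_mul_choose_mul_choose_mul_add_choose]
  refine sum_congr rfl fun a _ => ?_
  rw [smul_sum]
  refine sum_congr rfl fun b _ => ?_
  simp only [f, nsmul_eq_mul]
  ring

theorem sum_range_card_sum_powersetCard_succ {ι M : Type*} [Fintype ι] [AddCommMonoid M]
    (F : Finset ι → M) (h : F ∅ = 0) :
    ∑ m ∈ range (Fintype.card ι), ∑ S ∈ powersetCard (m + 1) univ, F S = ∑ S, F S := by
  rw [← powerset_univ, sum_powerset, card_univ, sum_range_succ', powersetCard_zero,
    sum_singleton, h, add_zero]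

theorem sum_filter_strictMono_eq_sum_powersetCard {ι M : Type*} [Fintype ι] [LinearOrder ι]
    [AddCommMonoid M] (k : ℕ) (F : Finset ι → M) :
    ∑ f : Fin k → ι with ∀ i j, i < j → f i < f j, F (univ.image f) =
      ∑ S ∈ powersetCard k univ, F S := by
  refine sum_bij' (fun f _ => univ.image f)
    (fun S hS i => S.orderEmbOfFin (mem_powersetCard.1 hS).2 i) ?_ ?_ ?_ ?_ ?_
  · intro f hf
    have hf : StrictMono f := fun i j h => (mem_filter.1 hf).2 i j h
    simp [mem_powersetCard, card_image_of_injective _ hf.injective]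
  · intro S hS
    simp only [mem_filter, mem_univ, true_and]
    exact fun i j h => (S.orderEmbOfFin _).strictMono h
  · intro f hf
    have hf : StrictMono f := fun i j h => (mem_filter.1 hf).2 i j h
    exact funext fun i => congrFun
      (orderEmbOfFin_unique _ (fun i => mem_image_of_mem f (mem_univ i)) hf).symm i
  · intro S hS
    refine eq_of_subset_of_card_le (fun t ht => ?_) ?_
    · obtain ⟨i, -, rfl⟩ := mem_image.1 ht
      exact orderEmbOfFin_mem S _ i
    · rw [card_image_of_injective _ (S.orderEmbOfFin _).injective, card_univ, Fintype.card_fin,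
        (mem_powersetCard.1 hS).2]
  · exact fun _ _ => rfl

theorem card_filter_lt_image_univ {k : ℕ} {ι : Type*} [LinearOrder ι] {f : Fin k → ι}
    (hf : StrictMono f) (j : Fin k) : #{t ∈ univ.image f | t < f j} = j := by
  rw [filter_image, card_image_of_injective _ hf.injective]
  simp only [hf.lt_iff_lt, filter_gt_eq_Iio, Fin.card_Iio]

theorem insert_filter_lt_union_filter_gt {ι : Type*} [LinearOrder ι] {S : Finset ι} {s : ι}
    (hs : s ∈ S) :
    insert s ({t ∈ S | t < s} ∪ {t ∈ S | s < t}) = S := by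
  ext t
  simp only [mem_insert, mem_union, mem_filter]
  rcases lt_trichotomy t s with h | rfl | h <;> grind

theorem card_eq_card_filter_lt_add_card_filter_gt {ι : Type*} [LinearOrder ι] {S : Finset ι}
    {s : ι} (hs : s ∈ S) :
    #S = #{t ∈ S | t < s} + #{t ∈ S | s < t} + 1 := by
  nth_rw 1 [← insert_filter_lt_union_filter_gt hs]
  rw [card_insert_of_notMem (by simp), card_union_of_disjoint
    (disjoint_filter.2 fun _ _ h h' => lt_asymm h h')]

section Pattern

variable {k : ℕ} {α : Type*} [LinearOrder α]

def IsPattern (π : Equiv.Perm (Fin k)) (g : Fin k → α) : Prop :=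
  ∀ i j, π i < π j ↔ g i < g j

theorem Equiv.Perm.val_eq_card_filter_lt (π : Equiv.Perm (Fin k)) (i : Fin k) :
    (π i : ℕ) = #{j | π j < π i} := by
  rw [← Fin.card_Iio, ← card_map π.symm.toEmbedding]
  congr 1
  ext j
  simp [mem_map_equiv]

theorem IsPattern.unique {π π' : Equiv.Perm (Fin k)} {g : Fin k → α} (h : IsPattern π g)
    (h' : IsPattern π' g) : π = π' := by
  refine Equiv.ext fun i => Fin.ext ?_
  rw [π.val_eq_card_filter_lt, π'.val_eq_card_filter_lt]
  simp only [h _ i, h' _ i]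

theorem exists_isPattern {g : Fin k → α} (hg : Function.Injective g) : ∃ π, IsPattern π g := by
  let e := (univ.image g).orderIsoOfFin (by rw [card_image_of_injective _ hg, card_fin])
  let p : Fin k → Fin k := fun i => e.symm ⟨g i, mem_image_of_mem g (mem_univ i)⟩
  have hinj : Function.Injective p := fun i j hij => hg <| by simpa [p] using hij
  exact ⟨Equiv.ofBijective p (Finite.injective_iff_bijective.1 hinj), fun i j => by simp [p]⟩

theorem sum_mul_occ {R : Type*} [CommSemiring R] {n : ℕ} (τ : Equiv.Perm (Fin n))
    (w : Equiv.Perm (Fin k) → R) (W : (Fin k → Fin n) → R)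
    (hw : ∀ π f, StrictMono f → IsPattern π (τ ∘ f) → w π = W f) :
    ∑ π, w π * (occ π τ : R) = ∑ f : Fin k → Fin n with ∀ i j, i < j → f i < f j, W f := by
  calc ∑ π, w π * (occ π τ : R)
      = ∑ π, ∑ f : Fin k → Fin n with
          (∀ i j, i < j → f i < f j) ∧ ∀ i j, π i < π j ↔ τ (f i) < τ (f j), w π := by
        simp [occ, mul_comm]
    _ = ∑ f : Fin k → Fin n with ∀ i j, i < j → f i < f j,
          ∑ π with ∀ i j, π i < π j ↔ τ (f i) < τ (f j), w π :=
        sum_comm' fun _ _ => by simp only [mem_filter, mem_univ, true_and]; tauto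
    _ = _ := sum_congr rfl fun f hf => by
        have hf : StrictMono f := fun i j h => (mem_filter.1 hf).2 i j h
        obtain ⟨π₀, h₀⟩ := exists_isPattern (τ.injective.comp hf.injective)
        have hπ₀ : π₀ ∈ ({π | ∀ i j, π i < π j ↔ τ (f i) < τ (f j)} : Finset _) :=
          mem_filter.2 ⟨mem_univ _, fun i j => h₀ i j⟩
        rw [sum_eq_single_of_mem π₀ hπ₀ fun π hπ hne =>
          absurd (IsPattern.unique (g := τ ∘ f) (fun i j => (mem_filter.1 hπ).2 i j) h₀) hne]
        exact hw π₀ f hf h₀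

end Pattern

section SkewFix

variable {ι α : Type*} [LinearOrder ι] [LinearOrder α]

def skewFixIn (g : ι → α) (S : Finset ι) : Finset ι :=
  {s ∈ S | ∀ t ∈ S, (t < s → g s < g t) ∧ (s < t → g t < g s)}

theorem ssfPos_eq_skewFixIn {k : ℕ} (π : Equiv.Perm (Fin k)) : ssfPos π = skewFixIn π univ := by
  ext j
  simp [ssfPos, skewFixIn, forall_and]

theorem IsPattern.skewFixIn_eq {k : ℕ} {π : Equiv.Perm (Fin k)} {g : Fin k → α}
    (h : IsPattern π g) (S : Finset (Fin k)) : skewFixIn π S = skewFixIn g S := by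
  ext s
  simp only [skewFixIn, mem_filter, h _ _]

theorem val_apply_of_mem_ssfPos {m : ℕ} {π : Equiv.Perm (Fin (m + 1))} {j : Fin (m + 1)}
    (hj : j ∈ ssfPos π) : (π j : ℕ) = m - j := by
  simp only [ssfPos, mem_filter, mem_univ, true_and] at hj
  have hIoi : ({i | π i < π j} : Finset (Fin (m + 1))) = Ioi j := by
    ext i
    simp only [mem_filter, mem_univ, true_and, mem_Ioi]
    rcases lt_trichotomy i j with h | rfl | h
    · simp [h.not_gt, (hj.1 i h).not_gt]
    · simp
    · simp [h, hj.2 i h]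
  rw [π.val_eq_card_filter_lt, hIoi, Fin.card_Ioi, Nat.add_sub_cancel]

theorem skewFixIn_image {κ : Type*} [LinearOrder κ] {f : κ → ι} (hf : StrictMono f) (g : ι → α)
    (S : Finset κ) : skewFixIn g (S.image f) = (skewFixIn (g ∘ f) S).image f := by
  ext s
  simp only [skewFixIn, mem_filter, mem_image, forall_exists_index, and_imp,
    forall_apply_eq_imp_iff₂, Function.comp_apply]
  constructor
  · rintro ⟨⟨i, hi, rfl⟩, h⟩
    exact ⟨i, ⟨hi, fun t ht => by simpa [hf.lt_iff_lt] using h t ht⟩, rfl⟩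
  · rintro ⟨i, ⟨hi, h⟩, rfl⟩
    exact ⟨⟨i, hi, rfl⟩, fun t ht => by simpa [hf.lt_iff_lt] using h t ht⟩

def skewWeight (S : Finset ι) (s : ι) : ℤ := (-1) ^ (#S - 1) * (#S - 1).choose #{t ∈ S | t < s}

variable [Fintype ι]

def invBefore (g : ι → α) (s : ι) : Finset ι := {i | i < s ∧ g s < g i}

def invAfter (g : ι → α) (s : ι) : Finset ι := {i | s < i ∧ g i < g s}

theorem sum_skewWeight (g : ι → α) (s : ι) :
    ∑ S with s ∈ skewFixIn g S, skewWeight S s =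
      ∑ A ∈ (invBefore g s).powerset, ∑ B ∈ (invAfter g s).powerset,
        (-1 : ℤ) ^ (#A + #B) * (#A + #B).choose #A := by
  rw [← sum_product' (f := fun A B => (-1 : ℤ) ^ (#A + #B) * (#A + #B).choose #A)]
  refine sum_nbij' (fun S => ({t ∈ S | t < s}, {t ∈ S | s < t}))
    (fun AB => insert s (AB.1 ∪ AB.2)) ?_ ?_ ?_ ?_ ?_
  · intro S hS
    simp only [skewFixIn, mem_filter, mem_univ, true_and] at hS
    simp only [invBefore, invAfter, mem_product, mem_powerset, subset_iff, mem_filter, mem_univ,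
      true_and]
    constructor <;> intro t ht <;> grind
  · rintro ⟨A, B⟩ hAB
    simp only [invBefore, invAfter, mem_product, mem_powerset, subset_iff, mem_filter, mem_univ,
      true_and] at hAB
    simp only [skewFixIn, mem_filter, mem_univ, true_and, mem_insert, mem_union]
    grind
  · intro S hS
    simp only [skewFixIn, mem_filter, mem_univ, true_and] at hS
    exact insert_filter_lt_union_filter_gt hS.1
  · rintro ⟨A, B⟩ hAB
    simp only [invBefore, invAfter, mem_product, mem_powerset, subset_iff, mem_filter, mem_univ,
      true_and] at hAB
    ext t <;> simp only [mem_filter, mem_insert, mem_union] <;> grind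
  · intro S hS
    simp only [skewFixIn, mem_filter, mem_univ, true_and] at hS
    simp only [skewWeight, card_eq_card_filter_lt_add_card_filter_gt hS.1, Nat.add_sub_cancel]

end SkewFix

theorem sum_ssfPos_mul_occ {n : ℕ} (τ : Equiv.Perm (Fin n)) (m : ℕ) :
    ∑ π : Equiv.Perm (Fin (m + 1)),
        (-1 : ℤ) ^ m * (∑ j ∈ ssfPos π, (m.choose (π j : ℕ) : ℤ)) * (occ π τ : ℤ) =
      ∑ S ∈ powersetCard (m + 1) univ, ∑ s ∈ skewFixIn τ S, skewWeight S s := by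
  rw [← sum_filter_strictMono_eq_sum_powersetCard]
  refine sum_mul_occ τ _ _ fun π f hf hπ => ?_
  have hcard : #(univ.image f) = m + 1 := by rw [card_image_of_injective _ hf.injective, card_fin]
  rw [skewFixIn_image hf, sum_image hf.injective.injOn, mul_sum, ← hπ.skewFixIn_eq,
    ← ssfPos_eq_skewFixIn]
  refine sum_congr rfl fun j hj => ?_
  rw [skewWeight, hcard, Nat.add_sub_cancel, card_filter_lt_image_univ hf,
    val_apply_of_mem_ssfPos hj, Nat.choose_symm (Nat.lt_succ_iff.1 j.is_lt)]

theorem apply_eq_self_iff_card_invBefore_eq {n : ℕ} (τ : Equiv.Perm (Fin n)) (s : Fin n) :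
    τ s = s ↔ #(invBefore τ s) = #(invAfter τ s) := by
  set V : Finset (Fin n) := {i | τ i < τ s}
  have hne {i} (h : i ≠ s) : τ i ≠ τ s := τ.injective.ne h
  have hbefore : invBefore τ s = Iio s \ V := by
    ext i
    simp only [invBefore, V, mem_filter, mem_univ, true_and, mem_sdiff, mem_Iio, not_lt]
    exact and_congr_right fun h => ⟨le_of_lt, fun h' => h'.lt_of_ne (hne h.ne).symm⟩
  have hafter : invAfter τ s = V \ Iio s := by
    ext i
    simp only [invAfter, V, mem_filter, mem_univ, true_and, mem_sdiff, mem_Iio, not_lt]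
    exact ⟨fun h => ⟨h.2, h.1.le⟩,
      fun h => ⟨h.2.lt_of_ne (by rintro rfl; exact lt_irrefl _ h.1), h.1⟩⟩
  have hL := card_sdiff_add_card_inter (Iio s) V
  have hV := card_sdiff_add_card_inter V (Iio s)
  rw [Fin.card_Iio, ← hbefore] at hL
  rw [← τ.val_eq_card_filter_lt, inter_comm, ← hafter] at hV
  rw [Fin.ext_iff]
  omega

/-- Patterns of size `m + 1 > n` have no occurrences, and the paper's `C(|π| - 1, x - 1)` at the
1-indexed value `x = π j + 1` is `C(m, π j)`. -/
theorem fix_expansion (n : ℕ) (τ : Equiv.Perm (Fin n)) :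
    ((univ.filter fun j : Fin n => τ j = j).card : ℤ) =
      ∑ m ∈ range n, ∑ π : Equiv.Perm (Fin (m + 1)),
        (-1 : ℤ) ^ m * (∑ j ∈ ssfPos π, (m.choose (π j : ℕ) : ℤ)) * (occ π τ : ℤ) := by
  symm
  calc _ = ∑ m ∈ range n, ∑ S ∈ powersetCard (m + 1) univ, ∑ s ∈ skewFixIn τ S, skewWeight S s :=
        sum_congr rfl fun m _ => sum_ssfPos_mul_occ τ m
    _ = ∑ S : Finset (Fin n), ∑ s ∈ skewFixIn τ S, skewWeight S s := by
        simpa using sum_range_card_sum_powersetCard_succ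
          (fun S : Finset (Fin n) => ∑ s ∈ skewFixIn τ S, skewWeight S s) (by simp [skewFixIn])
    _ = ∑ s, ∑ S with s ∈ skewFixIn τ S, skewWeight S s := sum_comm' (by simp)
    _ = ∑ s, if τ s = s then 1 else 0 := sum_congr rfl fun s _ => by
        rw [sum_skewWeight, sum_powerset_sum_powerset_neg_one_pow_mul_add_choose]
        exact if_congr (apply_eq_self_iff_card_invBefore_eq τ s).symm rfl rfl
    _ = _ := by rw [sum_boole]
end
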